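/- Let m ≥ 2, p₁,…,p_m ∈ [2,∞] (with possibly p_j = ∞), r₁,…,r_m ∈ (0,∞), and let k ∈ {1,…,m} be such that r_j < 2 for j ≤ k and r_j ≥ 2 for j > k. Assume there is D ≥ 1 such that (Σ_{i₁,…,i_m=1}^n |T(e_{i₁},…,e_{i_m})|²)^{1/2} ≤ D n^{|1/p| − 1/2} ‖T‖ for all m-linear T : ℓ_{p₁}^n × ⋯ × ℓ_{p_m}^n → ℂ and all n, where |1/p| = Σ_j 1/p_j. Then (Σ_{i₁}(…(Σ_{i_m}|T(e_{i₁},…,e_{i_m})|^{r_m})^{r_{m-1}/r_m}…)^{r₁/r₂})^{1/r₁} ≤ D · n^{Σ_{j=1}^k 1/r_j + |1/p| − (k+1)/2} · ‖T‖ for all such T and n. -/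

import Mathlib

open scoped ENNReal

noncomputable def mixedSum {n : ℕ} : (m : ℕ) → (Fin m → ℝ) → ((Fin m → Fin n) → ℝ) → ℝ
  | 0, _, F => F finZeroElim
  | m + 1, r, F =>
      (∑ i : Fin n,
        (mixedSum m (fun j => r j.succ) (fun is => F (Fin.cons i is))) ^ r 0) ^ (1 / r 0)

/-! The mixed sum is an iterated `ℓ_{r_j}` norm. On `ℝ^n` one has `‖x‖_r ≤ n^{1/r - 1/2} ‖x‖_2`
for `r < 2` (Hölder) and `‖x‖_r ≤ ‖x‖_2` for `r ≥ 2`, so peeling off the indices one at a time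
bounds the mixed sum by `n^{∑_{j<k} (1/r_j - 1/2)}` times the full `ℓ_2` sum, to which the
hypothesis applies. -/

open Finset Real

theorem Real.sum_rpow_le_rpow_sum {ι : Type*} (s : Finset ι) {f : ι → ℝ}
    (hf : ∀ i ∈ s, 0 ≤ f i) {p : ℝ} (hp : 1 ≤ p) :
    ∑ i ∈ s, f i ^ p ≤ (∑ i ∈ s, f i) ^ p := by
  classical
  induction s using Finset.induction_on with
  | empty => simp [zero_rpow (by positivity : p ≠ 0)]
  | insert i s hi ih =>
    rw [forall_mem_insert] at hf
    rw [sum_insert hi, sum_insert hi]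
    calc f i ^ p + ∑ j ∈ s, f j ^ p ≤ f i ^ p + (∑ j ∈ s, f j) ^ p := by gcongr; exact ih hf.2
      _ ≤ (f i + ∑ j ∈ s, f j) ^ p :=
        add_rpow_le_rpow_add hf.1 (sum_nonneg hf.2) hp

section FiniteSums

variable {ι : Type*} [Fintype ι] {a : ι → ℝ} {t : ℝ}

theorem sum_rpow_one_div_le_of_two_le (ha : ∀ i, 0 ≤ a i) (ht : 2 ≤ t) :
    (∑ i, a i ^ t) ^ (1 / t) ≤ (∑ i, a i ^ (2 : ℝ)) ^ ((1 : ℝ) / 2) := by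
  have hsq : ∀ i, a i ^ t = (a i ^ (2 : ℝ)) ^ (t / 2) := fun i => by
    rw [← rpow_mul (ha i)]; ring_nf
  have hsum : 0 ≤ ∑ i, a i ^ (2 : ℝ) := sum_nonneg fun i _ => rpow_nonneg (ha i) _
  calc (∑ i, a i ^ t) ^ (1 / t)
      ≤ ((∑ i, a i ^ (2 : ℝ)) ^ (t / 2)) ^ (1 / t) := by
        simp only [hsq]
        gcongr
        · exact sum_nonneg fun i _ => rpow_nonneg (rpow_nonneg (ha i) _) _
        · exact Real.sum_rpow_le_rpow_sum _ (fun i _ => rpow_nonneg (ha i) _) (by linarith)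
    _ = (∑ i, a i ^ (2 : ℝ)) ^ ((1 : ℝ) / 2) := by
        rw [← rpow_mul hsum]; congr 1; field_simp

theorem sum_rpow_one_div_le_card_rpow_mul_of_le_two (ha : ∀ i, 0 ≤ a i) (ht0 : 0 < t)
    (ht2 : t ≤ 2) :
    (∑ i, a i ^ t) ^ (1 / t) ≤
      (Fintype.card ι : ℝ) ^ (1 / t - 1 / 2) * (∑ i, a i ^ (2 : ℝ)) ^ ((1 : ℝ) / 2) := by
  have hsq : ∀ i, (a i ^ t) ^ (2 / t) = a i ^ (2 : ℝ) := fun i => by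
    rw [← rpow_mul (ha i)]; congr 1; field_simp
  have hholder := rpow_sum_le_const_mul_sum_rpow_of_nonneg (s := univ) (f := fun i => a i ^ t)
    (p := 2 / t) (by rw [le_div_iff₀ ht0]; linarith) fun i _ => rpow_nonneg (ha i) _
  simp only [hsq, card_univ] at hholder
  have hsum : 0 ≤ ∑ i, a i ^ t := sum_nonneg fun i _ => rpow_nonneg (ha i) _
  calc (∑ i, a i ^ t) ^ (1 / t) = ((∑ i, a i ^ t) ^ (2 / t)) ^ ((1 : ℝ) / 2) := by
        rw [← rpow_mul hsum]; congr 1; field_simp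
    _ ≤ ((Fintype.card ι : ℝ) ^ (2 / t - 1) * ∑ i, a i ^ (2 : ℝ)) ^ ((1 : ℝ) / 2) := by
        gcongr
    _ = (Fintype.card ι : ℝ) ^ (1 / t - 1 / 2) * (∑ i, a i ^ (2 : ℝ)) ^ ((1 : ℝ) / 2) := by
        rw [mul_rpow (by positivity) (sum_nonneg fun i _ => rpow_nonneg (ha i) _),
          ← rpow_mul (by positivity)]
        congr 2; ring

theorem sum_rpow_one_div_le_card_rpow_mul (ha : ∀ i, 0 ≤ a i) (ht : 0 < t) :
    (∑ i, a i ^ t) ^ (1 / t) ≤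
      (Fintype.card ι : ℝ) ^ max (1 / t - 1 / 2) 0 * (∑ i, a i ^ (2 : ℝ)) ^ ((1 : ℝ) / 2) := by
  rcases le_total t 2 with ht2 | ht2
  · rw [max_eq_left (by rw [sub_nonneg]; gcongr)]
    exact sum_rpow_one_div_le_card_rpow_mul_of_le_two ha ht ht2
  · rw [max_eq_right (by rw [sub_nonpos]; gcongr), rpow_zero, one_mul]
    exact sum_rpow_one_div_le_of_two_le ha ht2

theorem sum_mul_rpow_one_div (ha : ∀ i, 0 ≤ a i) {c : ℝ} (hc : 0 ≤ c) (ht : 0 < t) :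
    (∑ i, (c * a i) ^ t) ^ (1 / t) = c * (∑ i, a i ^ t) ^ (1 / t) := by
  simp only [mul_rpow hc (ha _), ← mul_sum]
  rw [mul_rpow (by positivity) (sum_nonneg fun i _ => rpow_nonneg (ha i) _), ← rpow_mul hc,
    mul_one_div_cancel ht.ne', rpow_one]

end FiniteSums

theorem Fin.sum_univ_cons {M : Type*} [AddCommMonoid M] {n m : ℕ}
    (G : (Fin (m + 1) → Fin n) → M) :
    ∑ i : Fin n, ∑ is : Fin m → Fin n, G (Fin.cons i is) = ∑ f, G f := by
  rw [← (Fin.consEquiv fun _ => Fin n).sum_comp G, Fintype.sum_prod_type]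
  rfl

theorem mixedSum_nonneg {n m : ℕ} (r : Fin m → ℝ) {F : (Fin m → Fin n) → ℝ}
    (hF : ∀ i, 0 ≤ F i) : 0 ≤ mixedSum m r F := by
  induction m with
  | zero => exact hF _
  | succ m ih =>
    exact rpow_nonneg (sum_nonneg fun i _ => rpow_nonneg (ih _ fun is => hF _) _) _

theorem mixedSum_le_rpow_mul_sqrt_sum_sq {n m : ℕ} {r : Fin m → ℝ} (hr : ∀ j, 0 < r j)
    {F : (Fin m → Fin n) → ℝ} (hF : ∀ i, 0 ≤ F i) :
    mixedSum m r F ≤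
      (n : ℝ) ^ (∑ j, max (1 / r j - 1 / 2) 0) * (∑ i, F i ^ (2 : ℝ)) ^ ((1 : ℝ) / 2) := by
  induction m with
  | zero =>
    rw [univ_eq_empty, sum_empty, rpow_zero, one_mul, Fintype.sum_unique, ← rpow_mul (hF _)]
    norm_num [mixedSum, Unique.eq_default finZeroElim]
  | succ m ih =>
    set C := (n : ℝ) ^ ∑ j : Fin m, max (1 / r j.succ - 1 / 2) 0
    set Q : Fin n → ℝ := fun i => (∑ is, F (Fin.cons i is) ^ (2 : ℝ)) ^ ((1 : ℝ) / 2)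
    have hQ : ∀ i, 0 ≤ Q i := fun i => rpow_nonneg (sum_nonneg fun is _ => rpow_nonneg (hF _) _) _
    have hQsq : ∑ i, Q i ^ (2 : ℝ) = ∑ f, F f ^ (2 : ℝ) := by
      rw [← Fin.sum_univ_cons]
      refine sum_congr rfl fun i _ => ?_
      rw [← rpow_mul (sum_nonneg fun is _ => rpow_nonneg (hF _) _)]
      norm_num
    have hC : 0 ≤ C := by positivity
    calc mixedSum (m + 1) r F ≤ (∑ i, (C * Q i) ^ r 0) ^ (1 / r 0) := by
          have hS : ∀ i : Fin n, 0 ≤ mixedSum m (fun j => r j.succ) fun is => F (Fin.cons i is) :=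
            fun i => mixedSum_nonneg _ fun _ => hF _
          refine rpow_le_rpow (sum_nonneg fun i _ => rpow_nonneg (hS i) _)
            (sum_le_sum fun i _ => rpow_le_rpow (hS i) (ih (fun j => hr j.succ) fun _ => hF _)
              (hr 0).le) (by have := hr 0; positivity)
      _ = C * (∑ i, Q i ^ r 0) ^ (1 / r 0) := sum_mul_rpow_one_div hQ hC (hr 0)
      _ ≤ C * ((n : ℝ) ^ max (1 / r 0 - 1 / 2) 0 * (∑ i, Q i ^ (2 : ℝ)) ^ ((1 : ℝ) / 2)) := by
          gcongr
          simpa using sum_rpow_one_div_le_card_rpow_mul hQ (hr 0)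
      _ = _ := by
          rw [hQsq, Fin.sum_univ_succ, rpow_add_of_nonneg (Nat.cast_nonneg n) (le_max_right _ _)
            (sum_nonneg fun j _ => le_max_right _ _)]
          ring

theorem sum_max_one_div_sub_half {m k : ℕ} (hkm : k ≤ m) {r : Fin m → ℝ} (hr : ∀ j, 0 < r j)
    (hrlt : ∀ j : Fin m, (j : ℕ) < k → r j < 2) (hrge : ∀ j : Fin m, k ≤ (j : ℕ) → 2 ≤ r j) :
    ∑ j, max (1 / r j - 1 / 2) 0 =
      ∑ j ∈ univ.filter (fun j : Fin m => (j : ℕ) < k), 1 / r j - k / 2 := by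
  have hterm : ∀ j : Fin m,
      max (1 / r j - 1 / 2) 0 = if (j : ℕ) < k then 1 / r j - 1 / 2 else 0 := by
    intro j
    split_ifs with hj
    · exact max_eq_left (by rw [sub_nonneg]; gcongr; exacts [hr j, (hrlt j hj).le])
    · exact max_eq_right (by rw [sub_nonpos]; gcongr; exact hrge j (not_lt.mp hj))
  rw [sum_congr rfl fun j _ => hterm j, ← sum_filter, sum_sub_distrib, sum_const,
    Fin.card_filter_val_lt, min_eq_right hkm, nsmul_eq_mul]
  ring

theorem stmt15_general (m k : ℕ) (hkm : k ≤ m)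
    (p : Fin m → ℝ≥0∞) [∀ j, Fact (1 ≤ p j)]
    (r : Fin m → ℝ) (hr : ∀ j, 0 < r j)
    (hrlt : ∀ j : Fin m, (j : ℕ) < k → r j < 2)
    (hrge : ∀ j : Fin m, k ≤ (j : ℕ) → 2 ≤ r j)
    (D : ℝ) (hD : 1 ≤ D)
    (h2 : ∀ (n : ℕ)
      (T : ContinuousMultilinearMap ℂ (fun j : Fin m => PiLp (p j) (fun _ : Fin n => ℂ)) ℂ),
      (∑ i : Fin m → Fin n, ‖T (fun j => WithLp.toLp (p j) (Pi.single (i j) 1))‖ ^ (2 : ℝ)) ^ ((1 : ℝ) / 2) ≤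
        D * (n : ℝ) ^ ((∑ j, (p j)⁻¹).toReal - 1 / 2) * ‖T‖)
    (n : ℕ)
    (T : ContinuousMultilinearMap ℂ (fun j : Fin m => PiLp (p j) (fun _ : Fin n => ℂ)) ℂ) :
    mixedSum m r (fun i => ‖T (fun j => WithLp.toLp (p j) (Pi.single (i j) 1))‖) ≤
      D * (n : ℝ) ^ ((∑ j ∈ Finset.univ.filter (fun j : Fin m => (j : ℕ) < k), 1 / r j) +
        (∑ j, (p j)⁻¹).toReal - ((k : ℝ) + 1) / 2) * ‖T‖ := by
  set a := ∑ j ∈ univ.filter (fun j : Fin m => (j : ℕ) < k), 1 / r j - k / 2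
  set b := (∑ j, (p j)⁻¹).toReal - 1 / 2
  have hD0 : 0 ≤ D := by linarith
  calc _ ≤ (n : ℝ) ^ a * (∑ i : Fin m → Fin n,
          ‖T (fun j => WithLp.toLp (p j) (Pi.single (i j) 1))‖ ^ (2 : ℝ)) ^ ((1 : ℝ) / 2) := by
        simpa only [sum_max_one_div_sub_half hkm hr hrlt hrge] using
          mixedSum_le_rpow_mul_sqrt_sum_sq hr fun _ => norm_nonneg _
    _ ≤ (n : ℝ) ^ a * (D * (n : ℝ) ^ b * ‖T‖) := by gcongr; exact h2 n T
    _ = D * ((n : ℝ) ^ a * (n : ℝ) ^ b) * ‖T‖ := by ring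
    -- an inequality rather than `rpow_add`, so that `n = 0` needs no separate treatment
    _ ≤ D * (n : ℝ) ^ (a + b) * ‖T‖ := by gcongr; exact le_rpow_add (Nat.cast_nonneg n) a b
    _ = _ := by congr 3; ring

/-- The case `p ∈ [2,∞]^m`, `M_<^2 = {1,…,k}`: from the `ℓ_2` estimate
`(∑|T(e_i)|²)^{1/2} ≤ D n^{|1/p|-1/2}‖T‖` one deduces the mixed-sum inequality with
`n^{∑_{j≤k} 1/r_j + |1/p| - (k+1)/2}`. -/
theorem stmt15 (m k : ℕ) (hm : 2 ≤ m) (hk1 : 1 ≤ k) (hkm : k ≤ m)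
    (p : Fin m → ℝ≥0∞) [∀ j, Fact (1 ≤ p j)] (hp2 : ∀ j, 2 ≤ p j)
    (r : Fin m → ℝ) (hr : ∀ j, 0 < r j)
    (hrlt : ∀ j : Fin m, (j : ℕ) < k → r j < 2)
    (hrge : ∀ j : Fin m, k ≤ (j : ℕ) → 2 ≤ r j)
    (D : ℝ) (hD : 1 ≤ D)
    (h2 : ∀ (n : ℕ)
      (T : ContinuousMultilinearMap ℂ (fun j : Fin m => PiLp (p j) (fun _ : Fin n => ℂ)) ℂ),
      (∑ i : Fin m → Fin n, ‖T (fun j => WithLp.toLp (p j) (Pi.single (i j) 1))‖ ^ (2 : ℝ)) ^ ((1 : ℝ) / 2) ≤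
        D * (n : ℝ) ^ ((∑ j, (p j)⁻¹).toReal - 1 / 2) * ‖T‖)
    (n : ℕ)
    (T : ContinuousMultilinearMap ℂ (fun j : Fin m => PiLp (p j) (fun _ : Fin n => ℂ)) ℂ) :
    mixedSum m r (fun i => ‖T (fun j => WithLp.toLp (p j) (Pi.single (i j) 1))‖) ≤
      D * (n : ℝ) ^ ((∑ j ∈ Finset.univ.filter (fun j : Fin m => (j : ℕ) < k), 1 / r j) +
        (∑ j, (p j)⁻¹).toReal - ((k : ℝ) + 1) / 2) * ‖T‖ :=
  stmt15_general m k hkm p r hr hrlt hrge D hD h2 n T
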